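/- arXiv:0908.1586 — 5 statements merged into one kernel-verified Lean document; each statement's English description precedes it below -/
import Mathlib

section
/- A max-plus cone in ℝ_max^n is finitely generated if, and only if, it is the intersection of finitely many half-spaces. -/
noncomputable section

/-- The max-plus (tropical) semiring `ℝ ∪ {-∞}`:
addition is `max`, multiplication is `+` (with `-∞` absorbing). -/
abbrev Rmax : Type := WithBot ℝ

/-- A max-plus (tropical) cone: a set stable under max-plus linear combinations. -/
def IsTropCone {ι : Type} (V : Set (ι → Rmax)) : Prop :=
  ∀ u ∈ V, ∀ w ∈ V, ∀ lam mu : Rmax, (fun i => max (lam + u i) (mu + w i)) ∈ V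

/-- `tropCone X`: the set of all max-plus linear combinations of finitely many
elements of `X`. -/
def tropCone {ι : Type} (X : Set (ι → Rmax)) : Set (ι → Rmax) :=
  {x | ∃ (m : ℕ) (lam : Fin m → Rmax) (w : Fin m → ι → Rmax),
        (∀ s, w s ∈ X) ∧ x = fun i => Finset.univ.sup (fun s => lam s + w s i)}

/-- `tropCo X`: max-plus convex combinations (coefficients with maximum `0 = 𝟙`)
of finitely many elements of `X`. -/
def tropCo {ι : Type} (X : Set (ι → Rmax)) : Set (ι → Rmax) :=
  {x | ∃ (m : ℕ) (lam : Fin m → Rmax) (w : Fin m → ι → Rmax),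
        (∀ s, w s ∈ X) ∧ Finset.univ.sup lam = (0 : Rmax) ∧
        x = fun i => Finset.univ.sup (fun s => lam s + w s i)}

/-- Max-plus Minkowski sum of two subsets. -/
def tropSum {ι : Type} (A B : Set (ι → Rmax)) : Set (ι → Rmax) :=
  {z | ∃ a ∈ A, ∃ b ∈ B, z = fun i => max (a i) (b i)}

/-- A half-space of `ℝ_max^ι`. -/
def IsHalfSpace {ι : Type} [Fintype ι] (H : Set (ι → Rmax)) : Prop :=
  ∃ a b : ι → Rmax,
    H = {x | Finset.univ.sup (fun i => a i + x i) ≤ Finset.univ.sup (fun j => b j + x j)}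

/-- An affine half-space of `ℝ_max^ι`. -/
def IsAffineHalfSpace {ι : Type} [Fintype ι] (H : Set (ι → Rmax)) : Prop :=
  ∃ (a b : ι → Rmax) (c d : Rmax),
    H = {x | max (Finset.univ.sup (fun i => a i + x i)) c ≤
             max (Finset.univ.sup (fun j => b j + x j)) d}

/-- A max-plus polyhedron: an intersection of finitely many affine half-spaces. -/
def IsPolyhedron {ι : Type} [Fintype ι] (C : Set (ι → Rmax)) : Prop :=
  ∃ (m : ℕ) (H : Fin m → Set (ι → Rmax)),
    (∀ k, IsAffineHalfSpace (H k)) ∧ C = ⋂ k, H k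

/-- The recession cone of a max-plus convex set. -/
def recessionCone {ι : Type} (C : Set (ι → Rmax)) : Set (ι → Rmax) :=
  {u | ∃ x ∈ C, ∀ lam : Rmax, (fun i => max (x i) (lam + u i)) ∈ C}

/-- A half-space minimal (for inclusion) among the half-spaces containing `V`. -/
def IsMinimalHalfSpace {ι : Type} [Fintype ι] (V H : Set (ι → Rmax)) : Prop :=
  IsHalfSpace H ∧ V ⊆ H ∧ ¬ ∃ H', IsHalfSpace H' ∧ V ⊆ H' ∧ H' ⊂ H

/-- The half-space written in normal form: `max_{i ∈ I} (a i + x i) ≤ max_{j ∈ J} (a j + x j)`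
(the sup over an empty index set being `⊥ = -∞`). -/
def halfSpace {ι : Type} (I J : Finset ι) (a : ι → ℝ) : Set (ι → Rmax) :=
  {x | I.sup (fun i => ((a i : Rmax)) + x i) ≤ J.sup (fun j => ((a j : Rmax)) + x j)}

/-- The max-plus cone generated by the vectors `v 0, …, v (p-1)` (finite entries). -/
def genCone {ι : Type} [Fintype ι] {p : ℕ} (v : Fin p → ι → ℝ) : Set (ι → Rmax) :=
  {x | ∃ lam : Fin p → Rmax, x = fun i => Finset.univ.sup (fun r => lam r + ((v r i : Rmax)))}

/-- `S_j(x)`: the `j`-th component of the type of `x` relative to the generators `v`. -/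
def typeSet {ι : Type} {p : ℕ} (v : Fin p → ι → ℝ) (x : ι → ℝ) (j : ι) : Set (Fin p) :=
  {r | v r j - x j = ⨆ k, (v r k - x k)}

/-- `V` has full support. -/
def HasFullSupport {ι : Type} (V : Set (ι → Rmax)) : Prop :=
  ∀ k : ι, ∃ v ∈ V, v k ≠ ⊥

/-- `x` is a vertex of the natural cell decomposition induced by the generators `v`:
the cell of `type(x)` consists exactly of the (finite) scalar multiples of `x`. -/
def IsVertex {ι : Type} {p : ℕ} (v : Fin p → ι → ℝ) (x : ι → ℝ) : Prop :=
  {y : ι → ℝ | ∀ j, typeSet v x j ⊆ typeSet v y j} = {y | ∃ c : ℝ, y = fun i => c + x i}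

/-- The `i`-th max-plus unit vector. -/
def unitVec {ι : Type} [DecidableEq ι] (i : ι) : ι → Rmax :=
  fun k => if k = i then (0 : Rmax) else ⊥

/-- The vector `⊕_{j ∈ J} b j ⊙ e^j`. -/
def jVec {ι : Type} [DecidableEq ι] (J : Finset ι) (b : ι → ℝ) : ι → Rmax :=
  fun k => if k ∈ J then ((b k : Rmax)) else ⊥

/-- The polar of a max-plus cone: the set of (pairs defining) half-spaces containing it. -/
def polar {ι : Type} [Fintype ι] (V : Set (ι → Rmax)) : Set ((ι → Rmax) × (ι → Rmax)) :=
  {q | ∀ x ∈ V, Finset.univ.sup (fun i => q.1 i + x i) ≤ Finset.univ.sup (fun j => q.2 j + x j)}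

/-- Extreme vector of a max-plus cone of pairs (e.g. the polar). -/
def IsExtremePair {ι : Type} (W : Set ((ι → Rmax) × (ι → Rmax)))
    (z : (ι → Rmax) × (ι → Rmax)) : Prop :=
  z ∈ W ∧ z ≠ (fun _ => (⊥ : Rmax), fun _ => (⊥ : Rmax)) ∧
    ∀ u ∈ W, ∀ w ∈ W,
      z = (fun i => max (u.1 i) (w.1 i), fun i => max (u.2 i) (w.2 i)) → z = u ∨ z = w

/-- Extreme point of a max-plus convex set. -/
def IsExtremePoint {ι : Type} (C : Set (ι → Rmax)) (z : ι → Rmax) : Prop :=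
  z ∈ C ∧ ∀ u ∈ C, ∀ w ∈ C, ∀ lam mu : Rmax, max lam mu = (0 : Rmax) →
    z = (fun i => max (lam + u i) (mu + w i)) → z = u ∨ z = w

/-- Extreme vector of a max-plus cone. -/
def IsExtremeVector {ι : Type} (W : Set (ι → Rmax)) (z : ι → Rmax) : Prop :=
  z ∈ W ∧ z ≠ (fun _ => (⊥ : Rmax)) ∧
    ∀ u ∈ W, ∀ w ∈ W, z = (fun i => max (u i) (w i)) → z = u ∨ z = w

/-- Projection of a subset of `ℝ_max^ι` onto the coordinates indexed by `K`. -/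
def projCone {ι : Type} (K : Finset ι) (V : Set (ι → Rmax)) :
    Set ({k : ι // k ∈ K} → Rmax) :=
  {y | ∃ x ∈ V, y = fun k => x k.1}

/-!
An intersection of finitely many half-spaces is finitely generated by induction on their number
(double description): if `w` generates `V`, then `V ∩ {a·x ≤ b·x}` is generated by the `w t` with
`a·w t ≤ b·w t` together with the vectors `(b·w t) ⊙ w r ⊕ (a·w r) ⊙ w t` for such `t`.

Conversely, let `V = span w` be finitely generated. The pairs `(a, b)` with `V ⊆ {a·x ≤ b·x}`
are those with `a·w r ≤ b·w r` for every generator, so they form a cone cut out by finitely many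
half-spaces of `ℝ_max^(2n)`, which by the first part is generated by finitely many `(a_k, b_k)`.
If `x ∉ V`, the separation theorem gives such a pair `(a, b)` with `a·x > b·x`; as `(a, b)` is a
max-plus combination of the `(a_k, b_k)`, some `a_k·x > b_k·x`. Hence `V` is the intersection of
the half-spaces `{a_k·x ≤ b_k·x}`.
-/

namespace MaxPlus

open Finset

variable {ι σ τ : Type}

lemma add_finset_sup (s : Finset σ) (f : σ → Rmax) (c : Rmax) :
    c + s.sup f = s.sup fun r => c + f r :=
  apply_sup_eq_sup_comp (c + ·) (fun x y => (max_add_add_left c x y).symm) (WithBot.add_bot c)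

lemma finset_sup_add (s : Finset σ) (f : σ → Rmax) (c : Rmax) :
    s.sup f + c = s.sup fun r => f r + c := by
  simp only [add_comm _ c, add_finset_sup]

lemma finset_sup_max (s : Finset σ) (f g : σ → Rmax) :
    (s.sup fun r => max (f r) (g r)) = max (s.sup f) (s.sup g) :=
  Finset.sup_sup

lemma coe_neg_add_cancel_left (b : ℝ) (y : Rmax) : ((-b : ℝ) : Rmax) + (b + y) = y := by
  rw [← add_assoc, ← WithBot.coe_add, neg_add_cancel, WithBot.coe_zero, zero_add]

lemma coe_add_neg_cancel_left (b : ℝ) (y : Rmax) : (b : Rmax) + ((-b : ℝ) + y) = y := by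
  simpa using coe_neg_add_cancel_left (-b) y

lemma unitVec_comm [DecidableEq σ] (r t : σ) : unitVec r t = unitVec t r := by
  simp only [unitVec, eq_comm]

lemma sup_unitVec_add [Fintype σ] [DecidableEq σ] (r₀ : σ) (f : σ → Rmax) :
    (univ.sup fun r => unitVec r₀ r + f r) = f r₀ := by
  refine le_antisymm (Finset.sup_le fun r _ => ?_) ?_
  · by_cases h : r = r₀ <;> simp [unitVec, h]
  · simpa [unitVec] using le_sup (f := fun r => unitVec r₀ r + f r) (mem_univ r₀)

def comb [Fintype σ] (lam : σ → Rmax) (w : σ → ι → Rmax) : ι → Rmax :=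
  fun i => univ.sup fun r => lam r + w r i

def span [Fintype σ] (w : σ → ι → Rmax) : Set (ι → Rmax) :=
  Set.range fun lam => comb lam w

def FG (V : Set (ι → Rmax)) : Prop :=
  ∃ (σ : Type) (_ : Fintype σ) (w : σ → ι → Rmax), V = span w

def dot [Fintype ι] (a x : ι → Rmax) : Rmax :=
  univ.sup fun i => a i + x i

def halfSpaceOf [Fintype ι] (a b : ι → Rmax) : Set (ι → Rmax) :=
  {x | dot a x ≤ dot b x}

section Span

variable [Fintype σ]

lemma comb_mem_span (lam : σ → Rmax) (w : σ → ι → Rmax) : comb lam w ∈ span w :=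
  ⟨lam, rfl⟩

lemma mem_span_self (w : σ → ι → Rmax) (r : σ) : w r ∈ span w := by
  classical
  exact ⟨unitVec r, funext fun i => sup_unitVec_add r fun t => w t i⟩

lemma bot_mem_span (w : σ → ι → Rmax) : (fun _ => ⊥) ∈ span w :=
  ⟨fun _ => ⊥, funext fun i => by simp [comb]⟩

lemma isTropCone_span (w : σ → ι → Rmax) : IsTropCone (span w) := by
  rintro _ ⟨lam, rfl⟩ _ ⟨mu, rfl⟩ c d
  refine ⟨fun r => max (c + lam r) (d + mu r), funext fun i => ?_⟩
  simp only [comb, add_finset_sup, ← finset_sup_max]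
  refine Finset.sup_congr rfl fun r _ => ?_
  simp only [← max_add_add_right, add_assoc]

lemma vadd_mem_span {w : σ → ι → Rmax} {y : ι → Rmax} (hy : y ∈ span w) (c : Rmax) :
    (fun i => c + y i) ∈ span w := by
  simpa using isTropCone_span w y hy y hy c ⊥

lemma comb_mem_span_of_forall_mem [Fintype τ] (lam : τ → Rmax) {w : σ → ι → Rmax}
    {y : τ → ι → Rmax} (hy : ∀ k, y k ∈ span w) : comb lam y ∈ span w := by
  choose mu hmu using hy
  refine ⟨fun r => univ.sup fun k => lam k + mu k r, funext fun i => ?_⟩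
  simp only [comb, ← hmu, finset_sup_add, add_finset_sup]
  rw [Finset.sup_comm]
  simp only [add_assoc]

lemma span_subset_span [Fintype τ] {w : σ → ι → Rmax} {y : τ → ι → Rmax}
    (hy : ∀ k, y k ∈ span w) : span y ⊆ span w := by
  rintro _ ⟨lam, rfl⟩
  exact comb_mem_span_of_forall_mem lam hy

lemma tropCone_range (w : σ → ι → Rmax) : tropCone (Set.range w) = span w := by
  refine Set.Subset.antisymm ?_ ?_
  · rintro _ ⟨m, lam, v, hv, rfl⟩
    choose f hf using hv
    exact comb_mem_span_of_forall_mem lam fun s => hf s ▸ mem_span_self w (f s)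
  · rintro _ ⟨lam, rfl⟩
    let e := (Fintype.equivFin σ).symm
    refine ⟨_, lam ∘ e, w ∘ e, fun s => ⟨e s, rfl⟩, funext fun i => ?_⟩
    simp only [comb, Function.comp_apply]
    rw [← Finset.map_univ_equiv e, Finset.sup_map]
    rfl

end Span

section HalfSpace

variable [Fintype ι]

lemma mem_halfSpaceOf {a b x : ι → Rmax} : x ∈ halfSpaceOf a b ↔ dot a x ≤ dot b x :=
  Iff.rfl

lemma dot_comm (a x : ι → Rmax) : dot a x = dot x a :=
  Finset.sup_congr rfl fun _ _ => add_comm _ _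

lemma dot_unitVec [DecidableEq ι] (i : ι) (x : ι → Rmax) : dot (unitVec i) x = x i :=
  sup_unitVec_add i x

lemma dot_const_add (c : Rmax) (a x : ι → Rmax) : dot (fun i => c + a i) x = c + dot a x := by
  simp only [dot, add_finset_sup, add_assoc]

lemma dot_comb [Fintype σ] (a : ι → Rmax) (lam : σ → Rmax) (w : σ → ι → Rmax) :
    dot a (comb lam w) = univ.sup fun r => lam r + dot a (w r) := by
  simp only [dot, comb, add_finset_sup]
  rw [Finset.sup_comm]
  simp only [add_left_comm]

lemma dot_max_add (a y z : ι → Rmax) (c d : Rmax) :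
    dot a (fun i => max (c + y i) (d + z i)) = max (c + dot a y) (d + dot a z) := by
  simp only [dot, add_finset_sup, ← finset_sup_max, ← max_add_add_left, add_left_comm]

lemma span_subset_halfSpaceOf [Fintype σ] {w : σ → ι → Rmax} {a b : ι → Rmax}
    (hw : ∀ r, w r ∈ halfSpaceOf a b) : span w ⊆ halfSpaceOf a b := by
  rintro _ ⟨lam, rfl⟩
  rw [mem_halfSpaceOf, dot_comb, dot_comb]
  exact Finset.sup_mono_fun fun r _ => add_le_add_right (hw r) _

lemma mem_halfSpaceOf_comb [Fintype σ] {a b : σ → ι → Rmax} {x : ι → Rmax} (mu : σ → Rmax)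
    (hx : ∀ k, x ∈ halfSpaceOf (a k) (b k)) : x ∈ halfSpaceOf (comb mu a) (comb mu b) := by
  rw [mem_halfSpaceOf, dot_comm, dot_comm (comb mu b), dot_comb, dot_comb]
  refine Finset.sup_mono_fun fun k _ => add_le_add_right ?_ _
  rw [dot_comm, dot_comm x]
  exact hx k

end HalfSpace

section DoubleDescription

variable [Fintype ι] [Fintype σ]

def interGens (w : σ → ι → Rmax) (a b : ι → Rmax) :
    {t // dot a (w t) ≤ dot b (w t)} ⊕ σ × {t // dot a (w t) ≤ dot b (w t)} → ι → Rmax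
  | .inl t => w t
  | .inr (r, t) => fun i => max (dot b (w t) + w r i) (dot a (w r) + w t i)

lemma interGens_mem (w : σ → ι → Rmax) (a b : ι → Rmax) (k) :
    interGens w a b k ∈ span w ∩ halfSpaceOf a b := by
  rcases k with t | ⟨r, t⟩
  · exact ⟨mem_span_self w t, t.2⟩
  · refine ⟨isTropCone_span w _ (mem_span_self w r) _ (mem_span_self w t) _ _, ?_⟩
    rw [interGens, mem_halfSpaceOf, dot_max_add, dot_max_add, add_comm (dot b (w t))]
    exact max_le (le_max_right _ _) (le_max_of_le_right (add_le_add_right t.2 _))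

lemma comb_eq_comb_interGens {w : σ → ι → Rmax} {a b : ι → Rmax} {lam : σ → Rmax} {s : σ}
    {β : ℝ} (hβ : ↑β = dot b (w s)) (hgood : dot a (w s) ≤ dot b (w s))
    (hmax : ∀ r, lam r + dot a (w r) ≤ lam s + dot b (w s)) :
    comb lam w = comb (fun r => lam r + ↑(-β)) fun r => interGens w a b (.inr (r, ⟨s, hgood⟩)) := by
  have hterm : ∀ r i, lam r + ↑(-β) + (dot b (w s) + w r i) = lam r + w r i := fun r i => by
    rw [← hβ, add_assoc, coe_neg_add_cancel_left]
  funext i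
  simp only [comb]
  refine le_antisymm (sup_mono_fun fun r _ => ?_) (Finset.sup_le fun r _ => ?_)
  · rw [← hterm r i]
    exact add_le_add_right (le_max_left _ _) _
  · rw [interGens, ← max_add_add_left, hterm]
    refine max_le (le_sup (f := fun r => lam r + w r i) (mem_univ r)) ?_
    calc lam r + ↑(-β) + (dot a (w r) + w s i)
        = lam r + dot a (w r) + (↑(-β) + w s i) := by ac_rfl
      _ ≤ lam s + ↑β + (↑(-β) + w s i) := add_le_add_left (hβ ▸ hmax r) _
      _ = lam s + w s i := by rw [add_assoc, coe_add_neg_cancel_left]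
      _ ≤ comb lam w i := le_sup (f := fun r => lam r + w r i) (mem_univ s)

lemma inter_halfSpaceOf_subset_span_interGens (w : σ → ι → Rmax) (a b : ι → Rmax) :
    span w ∩ halfSpaceOf a b ⊆ span (interGens w a b) := by
  rintro _ ⟨⟨lam, rfl⟩, hx⟩
  dsimp only at hx ⊢
  rw [mem_halfSpaceOf, dot_comb, dot_comb] at hx
  have hle : ∀ r, lam r + dot a (w r) ≤ univ.sup fun r => lam r + dot b (w r) :=
    fun r => (le_sup (f := fun r => lam r + dot a (w r)) (mem_univ r)).trans hx
  rcases eq_or_ne (univ.sup fun r => lam r + dot b (w r)) ⊥ with hbot | hbot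
  · have hcomb : comb lam w = comb (fun _ => 0) (fun r i => lam r + w r i) := by
      funext i
      simp only [comb, zero_add]
    rw [hcomb]
    refine comb_mem_span_of_forall_mem _ fun r => ?_
    by_cases hr : lam r = ⊥
    · simpa [hr] using bot_mem_span (interGens w a b)
    · have hA : dot a (w r) = ⊥ :=
        (WithBot.add_eq_bot.1 (le_bot_iff.1 (hbot ▸ hle r))).resolve_left hr
      exact vadd_mem_span (mem_span_self (interGens w a b) (Sum.inl ⟨r, hA ▸ bot_le⟩)) (lam r)
  · have hne : (univ : Finset σ).Nonempty := nonempty_iff_ne_empty.2 fun h => hbot (by simp [h])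
    obtain ⟨s, -, hs⟩ := exists_mem_eq_sup univ hne fun r => lam r + dot b (w r)
    rw [hs] at hle
    have hlam : lam s ≠ ⊥ := fun h => hbot (by simp [hs, h])
    obtain ⟨β, hβ⟩ := WithBot.ne_bot_iff_exists.1
      (show dot b (w s) ≠ ⊥ from fun h => hbot (by simp [hs, h]))
    have hgood : dot a (w s) ≤ dot b (w s) := (WithBot.add_le_add_iff_left hlam).1 (hle s)
    rw [comb_eq_comb_interGens hβ hgood hle]
    exact comb_mem_span_of_forall_mem _ fun r => mem_span_self _ _

lemma span_interGens (w : σ → ι → Rmax) (a b : ι → Rmax) :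
    span (interGens w a b) = span w ∩ halfSpaceOf a b :=
  Set.Subset.antisymm
    (Set.subset_inter (span_subset_span fun k => (interGens_mem w a b k).1)
      (span_subset_halfSpaceOf fun k => (interGens_mem w a b k).2))
    (inter_halfSpaceOf_subset_span_interGens w a b)

end DoubleDescription

namespace FG

lemma univ [Fintype ι] : FG (Set.univ : Set (ι → Rmax)) := by
  classical
  refine ⟨ι, inferInstance, unitVec, (Set.eq_univ_of_forall fun x =>
    show x ∈ span unitVec from ⟨x, funext fun i => ?_⟩).symm⟩
  simp only [comb, unitVec_comm _ i, add_comm (x _)]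
  exact sup_unitVec_add i x

lemma inter_halfSpaceOf [Fintype ι] {V : Set (ι → Rmax)} (hV : FG V) (a b : ι → Rmax) :
    FG (V ∩ halfSpaceOf a b) := by
  obtain ⟨σ, _, w, rfl⟩ := hV
  exact ⟨_, inferInstance, interGens w a b, (span_interGens w a b).symm⟩

lemma iInter_halfSpaceOf [Fintype ι] [Fintype τ] (a b : τ → ι → Rmax) :
    FG (⋂ k, halfSpaceOf (a k) (b k)) := by
  classical
  have key : ∀ s : Finset τ, FG (⋂ k ∈ s, halfSpaceOf (a k) (b k)) := by
    intro s
    induction s using Finset.induction_on with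
    | empty => simpa using FG.univ
    | insert k s _ ih =>
      rw [Finset.set_biInter_insert, Set.inter_comm]
      exact ih.inter_halfSpaceOf _ _
  simpa using key Finset.univ

end FG

lemma exists_finite_eq_tropCone_iff {V : Set (ι → Rmax)} :
    (∃ X, X.Finite ∧ V = tropCone X) ↔ FG V := by
  constructor
  · rintro ⟨X, hX, rfl⟩
    have := hX.fintype
    exact ⟨X, inferInstance, Subtype.val, by rw [← tropCone_range, Subtype.range_coe]⟩
  · rintro ⟨σ, _, w, rfl⟩
    exact ⟨Set.range w, Set.finite_range w, (tropCone_range w).symm⟩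

section Separation

variable [Fintype ι] [Fintype σ]

lemma exists_greatest_coe_add_le {x y : ι → Rmax} (hsupp : ∀ i, x i = ⊥ → y i = ⊥)
    (hy : ∃ i, y i ≠ ⊥) : ∃ ℓ : ℝ, (∀ i, ↑ℓ + y i ≤ x i) ∧ ∃ i, x i ≠ ⊥ ∧ ↑ℓ + y i = x i := by
  classical
  obtain ⟨i₀, hi₀⟩ := hy
  obtain ⟨i₁, hi₁, hmin⟩ := (univ.filter fun i => y i ≠ ⊥).exists_min_image
    (fun i => (x i).unbotD 0 - (y i).unbotD 0) ⟨i₀, by simpa using hi₀⟩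
  have hy₁ : y i₁ ≠ ⊥ := (mem_filter.1 hi₁).2
  obtain ⟨p₁, hp₁⟩ := WithBot.ne_bot_iff_exists.1 hy₁
  obtain ⟨q₁, hq₁⟩ := WithBot.ne_bot_iff_exists.1 (mt (hsupp i₁) hy₁)
  refine ⟨q₁ - p₁, fun i => ?_, i₁, hq₁ ▸ WithBot.coe_ne_bot, ?_⟩
  · by_cases hyi : y i = ⊥
    · simp [hyi]
    obtain ⟨p, hp⟩ := WithBot.ne_bot_iff_exists.1 hyi
    obtain ⟨q, hq⟩ := WithBot.ne_bot_iff_exists.1 (mt (hsupp i) hyi)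
    have := hmin i (by simpa using hyi)
    rw [← hp, ← hq, ← hp₁, ← hq₁] at this
    rw [← hp, ← hq]
    simp only [WithBot.unbotD_coe] at this
    exact WithBot.coe_le_coe.2 (by linarith)
  · rw [← hp₁, ← hq₁, ← WithBot.coe_add, sub_add_cancel]

/-- `ν` is the projection of `x` onto `span w`, i.e. its greatest element below `x`. -/
lemma exists_mem_span_le (w : σ → ι → Rmax) (x : ι → Rmax) :
    ∃ ν ∈ span w, (∀ i, ν i ≤ x i) ∧ ∀ r, (∀ i, x i = ⊥ → w r i = ⊥) → (∃ i, w r i ≠ ⊥) →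
      ∃ ℓ : ℝ, (∀ i, ↑ℓ + w r i ≤ ν i) ∧ ∃ i, x i ≠ ⊥ ∧ ν i = x i ∧ ↑ℓ + w r i = x i := by
  classical
  choose ℓ hℓ using fun r (h : (∀ i, x i = ⊥ → w r i = ⊥) ∧ ∃ i, w r i ≠ ⊥) =>
    exists_greatest_coe_add_le h.1 h.2
  let lam : σ → Rmax := fun r => if h : _ then ↑(ℓ r h) else ⊥
  have hterm : ∀ r i, lam r + w r i ≤ comb lam w i := fun r i =>
    le_sup (f := fun r => lam r + w r i) (mem_univ r)
  have hle : ∀ i, comb lam w i ≤ x i := fun i => Finset.sup_le fun r _ => by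
    by_cases h : (∀ i, x i = ⊥ → w r i = ⊥) ∧ ∃ i, w r i ≠ ⊥
    · simp only [lam, dif_pos h]
      exact (hℓ r h).1 i
    · simp only [lam, dif_neg h, WithBot.bot_add, bot_le]
  refine ⟨comb lam w, comb_mem_span lam w, hle, fun r h₁ h₂ => ?_⟩
  obtain ⟨-, i, hxi, heq⟩ := hℓ r ⟨h₁, h₂⟩
  have hlam : lam r = ↑(ℓ r ⟨h₁, h₂⟩) := dif_pos _
  exact ⟨ℓ r _, fun i => hlam ▸ hterm r i, i, hxi,
    le_antisymm (hle i) (heq ▸ hlam ▸ hterm r i), heq⟩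

/-- Right-hand side of the half-space separating `x` from `span w`: the constant `M` off the
support of `x` takes care of the generators not supported inside it, and `-x j` is put where
the projection `ν` of `x` touches `x`. -/
def sepCoeff (x ν : ι → Rmax) (M : ℝ) : ι → Rmax := fun j =>
  if x j = ⊥ then ↑M else if ν j = x j then ↑(-(x j).unbotD 0) else ⊥

lemma dot_sepCoeff_self_le_zero (x ν : ι → Rmax) (M : ℝ) : dot (sepCoeff x ν M) x ≤ 0 := by
  refine Finset.sup_le fun j _ => ?_
  by_cases hxj : x j = ⊥
  · simp [hxj]
  obtain ⟨q, hq⟩ := WithBot.ne_bot_iff_exists.1 hxj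
  by_cases hνj : ν j = x j
  · simp [sepCoeff, hνj, ← hq, ← WithBot.coe_add]
  · simp [sepCoeff, hxj, hνj]

lemma coe_add_le_dot_sepCoeff {x ν y : ι → Rmax} {M c : ℝ} {i₀ : ι} (hνc : ν i₀ ≤ c)
    (hM : ∀ j, (y i₀).unbotD 0 - c - (y j).unbotD 0 ≤ M)
    (hres : (∀ i, x i = ⊥ → y i = ⊥) → (∃ i, y i ≠ ⊥) → ∃ ℓ : ℝ,
      (∀ i, ↑ℓ + y i ≤ ν i) ∧ ∃ i, x i ≠ ⊥ ∧ ν i = x i ∧ ↑ℓ + y i = x i) :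
    ↑(-c) + y i₀ ≤ dot (sepCoeff x ν M) y := by
  by_cases hy₀ : y i₀ = ⊥
  · simp [hy₀]
  by_cases hout : ∃ j, x j = ⊥ ∧ y j ≠ ⊥
  · obtain ⟨j, hxj, hyj⟩ := hout
    refine le_trans ?_ (le_sup (f := fun j => sepCoeff x ν M j + y j) (mem_univ j))
    obtain ⟨p, hp⟩ := WithBot.ne_bot_iff_exists.1 hy₀
    obtain ⟨q, hq⟩ := WithBot.ne_bot_iff_exists.1 hyj
    have := hM j
    simp only [sepCoeff, if_pos hxj, ← hp, ← hq, WithBot.unbotD_coe] at this ⊢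
    rw [← WithBot.coe_add, ← WithBot.coe_add, WithBot.coe_le_coe]
    linarith
  push Not at hout
  obtain ⟨ℓ, hℓν, i₁, hx₁, hν₁, hℓ₁⟩ := hres hout ⟨i₀, hy₀⟩
  refine le_trans ?_ (le_sup (f := fun j => sepCoeff x ν M j + y j) (mem_univ i₁))
  refine (WithBot.add_le_add_iff_left (WithBot.coe_ne_bot (a := ℓ))).1 ?_
  obtain ⟨q, hq⟩ := WithBot.ne_bot_iff_exists.1 hx₁
  calc ↑ℓ + (↑(-c) + y i₀) = ↑(-c) + (↑ℓ + y i₀) := add_left_comm _ _ _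
    _ ≤ ↑(-c) + ↑c := add_le_add_right ((hℓν i₀).trans hνc) _
    _ = ↑ℓ + (sepCoeff x ν M i₁ + y i₁) := by
      rw [add_left_comm, hℓ₁]
      simp [sepCoeff, hν₁, ← hq, ← WithBot.coe_add]

theorem exists_halfSpaceOf_separating (w : σ → ι → Rmax) {x : ι → Rmax} (hx : x ∉ span w) :
    ∃ a b, span w ⊆ halfSpaceOf a b ∧ x ∉ halfSpaceOf a b := by
  classical
  obtain ⟨ν, hνspan, hνx, hres⟩ := exists_mem_span_le w x
  obtain ⟨i₀, hi₀⟩ : ∃ i₀, ν i₀ < x i₀ := by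
    by_contra! h
    exact hx ((funext fun i => le_antisymm (hνx i) (h i)) ▸ hνspan)
  obtain ⟨c, hνc, hcx⟩ := exists_between hi₀
  lift c to ℝ using ne_bot_of_gt hνc
  obtain ⟨M, hM⟩ := Finite.exists_le fun rj : σ × ι =>
    (w rj.1 i₀).unbotD 0 - c - (w rj.1 rj.2).unbotD 0
  have hdot : ∀ y, dot (fun i => ↑(-c) + unitVec i₀ i) y = ↑(-c) + y i₀ := fun y => by
    rw [dot_const_add, dot_unitVec]
  refine ⟨fun i => ↑(-c) + unitVec i₀ i, sepCoeff x ν M,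
    span_subset_halfSpaceOf fun r => ?_, ?_⟩
  · rw [mem_halfSpaceOf, hdot]
    exact coe_add_le_dot_sepCoeff hνc.le (fun j => hM (r, j)) (hres r)
  · rw [mem_halfSpaceOf, hdot, not_le]
    refine (dot_sepCoeff_self_le_zero x ν M).trans_lt
      ((WithBot.add_lt_add_iff_left (WithBot.coe_ne_bot (a := c))).1 ?_)
    rwa [add_zero, coe_add_neg_cancel_left]

end Separation

section Polar

variable [Fintype ι] [Fintype σ]

lemma dot_sumElim (a b y z : ι → Rmax) :
    dot (Sum.elim a b) (Sum.elim y z) = max (dot a y) (dot b z) := by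
  rw [dot, ← univ_disjSum_univ, sup_disjSum]
  rfl

lemma dot_bot_left (y : ι → Rmax) : dot (fun _ => ⊥) y = ⊥ := by
  simp [dot]

/-- The polar of `span w`, a pair `(a, b)` being encoded as `Sum.elim a b`. -/
def sumPolar (w : σ → ι → Rmax) : Set (ι ⊕ ι → Rmax) :=
  ⋂ r, halfSpaceOf (Sum.elim (w r) fun _ => ⊥) (Sum.elim (fun _ => ⊥) (w r))

lemma sumElim_mem_sumPolar_iff {w : σ → ι → Rmax} {a b : ι → Rmax} :
    Sum.elim a b ∈ sumPolar w ↔ span w ⊆ halfSpaceOf a b := by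
  simp only [sumPolar, Set.mem_iInter, mem_halfSpaceOf, dot_sumElim, dot_bot_left,
    max_bot_right, max_bot_left, dot_comm (w _)]
  exact ⟨span_subset_halfSpaceOf, fun h r => h (mem_span_self w r)⟩

theorem exists_span_eq_iInter_halfSpaceOf (w : σ → ι → Rmax) :
    ∃ (τ : Type) (_ : Fintype τ) (a b : τ → ι → Rmax),
      span w = ⋂ k, halfSpaceOf (a k) (b k) := by
  obtain ⟨τ, _, q, hq⟩ : FG (sumPolar w) := FG.iInter_halfSpaceOf _ _
  have hspan : ∀ k, span w ⊆ halfSpaceOf (q k ∘ Sum.inl) (q k ∘ Sum.inr) := fun k =>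
    sumElim_mem_sumPolar_iff.1 (by rw [Sum.elim_comp_inl_inr, hq]; exact mem_span_self q k)
  refine ⟨τ, inferInstance, fun k => q k ∘ Sum.inl, fun k => q k ∘ Sum.inr,
    Set.Subset.antisymm (Set.subset_iInter hspan) fun x hx => ?_⟩
  by_contra hxw
  obtain ⟨a, b, hab, hxab⟩ := exists_halfSpaceOf_separating w hxw
  obtain ⟨mu, hmu⟩ : Sum.elim a b ∈ span q := hq ▸ sumElim_mem_sumPolar_iff.2 hab
  have ha : comb mu (fun k => q k ∘ Sum.inl) = a := funext fun i => congrFun hmu (Sum.inl i)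
  have hb : comb mu (fun k => q k ∘ Sum.inr) = b := funext fun i => congrFun hmu (Sum.inr i)
  exact hxab (ha ▸ hb ▸ mem_halfSpaceOf_comb mu (Set.mem_iInter.1 hx))

end Polar

end MaxPlus

open MaxPlus in
theorem stmt_0_general {n : ℕ} (V : Set (Fin n → Rmax)) :
    (∃ X : Set (Fin n → Rmax), X.Finite ∧ V = tropCone X) ↔
      (∃ (m : ℕ) (H : Fin m → Set (Fin n → Rmax)),
        (∀ k, IsHalfSpace (H k)) ∧ V = ⋂ k, H k) := by
  rw [exists_finite_eq_tropCone_iff]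
  constructor
  · rintro ⟨σ, _, w, rfl⟩
    obtain ⟨τ, _, a, b, hab⟩ := exists_span_eq_iInter_halfSpaceOf w
    let e := (Fintype.equivFin τ).symm
    refine ⟨_, fun k => halfSpaceOf (a (e k)) (b (e k)), fun k => ⟨_, _, rfl⟩, ?_⟩
    rw [hab, e.surjective.iInter_comp fun k => halfSpaceOf (a k) (b k)]
  · rintro ⟨m, H, hH, rfl⟩
    choose a b hab using hH
    obtain rfl : H = fun k => halfSpaceOf (a k) (b k) := funext hab
    exact FG.iInter_halfSpaceOf a b

/-- a max-plus cone is finitely generated if, and only if, it is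
the intersection of finitely many half-spaces. -/
theorem stmt_0 {n : ℕ} (V : Set (Fin n → Rmax)) (hV : IsTropCone V) :
    (∃ X : Set (Fin n → Rmax), X.Finite ∧ V = tropCone X) ↔
      (∃ (m : ℕ) (H : Fin m → Set (Fin n → Rmax)),
        (∀ k, IsHalfSpace (H k)) ∧ V = ⋂ k, H k) :=
  stmt_0_general V
end
end

section
/- Let C ⊆ ℝ_max^n be a max-plus polyhedron with representation C = co(Z) ⊕ cone(Y), where Z, Y are finite subsets of ℝ_max^n. Then every extreme point of C belongs to Z, and every extreme vector of the recession cone of C has a non-zero scalar multiple belonging to Y. -/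
noncomputable section

/-!
Write `C = co Z ⊕ cone Y`. If an extreme point is `z = a ⊕ b` with `a ∈ co Z`, `b ∈ cone Y`, then
for `e > 0` also `z = a ⊕ (-e) ⊙ w` with `w = a ⊕ e ⊙ b ∈ C`; extremality gives `z = a` or
`z = w`, and in the latter case `z = a ⊕ (-e) ⊙ z` forces `z = a` anyway. The same trick, applied
to `a = ⊕ₛ λₛ ⊙ zₛ` with `e` smaller than the gap between `0` and the negative coefficients, makes
`z` the maximum of the points `zₛ` with `λₛ = 0`, hence equal to one of them.

For the recession cone, let `x ⊕ t ⊙ u ∈ C` for all `t`. Since `co Z` is bounded above, for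
large `t` every finite coordinate `u i` of `t ⊙ u` is attained by a term `μ ⊙ y` of the `cone Y`
part. As `Y` is finite, one `y` serves for arbitrarily large `t`, and letting `t → ∞` yields a
multiple of `y` below `u` that agrees with `u` at `i`. Hence the recession cone is `cone Y`, and
an extreme vector of it equals one of the terms `μ ⊙ y` of its decomposition.
-/

open Finset Filter

theorem Finset.exists_eq_of_sup'_eq_of_supClosed {α σ : Type*} [SemilatticeSup α] {D : Set α}
    (hD : SupClosed D) {a : α} (ha : ∀ u ∈ D, ∀ w ∈ D, u ⊔ w = a → u = a ∨ w = a)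
    {s : Finset σ} (hs : s.Nonempty) {f : σ → α} (hf : ∀ i ∈ s, f i ∈ D)
    (h : s.sup' hs f = a) : ∃ i ∈ s, f i = a := by
  induction hs using Finset.Nonempty.cons_induction with
  | singleton i => exact ⟨i, mem_singleton_self i, by simpa using h⟩
  | cons i s hi hs ih =>
    rw [sup'_cons hs] at h
    have hsD : s.sup' hs f ∈ D := hD.finsetSup'_mem hs fun j hj => hf j (mem_cons_of_mem hj)
    rcases ha _ (hf i (mem_cons_self i s)) _ hsD h with h' | h'
    · exact ⟨i, mem_cons_self i s, h'⟩
    · obtain ⟨j, hj, hfj⟩ := ih (fun j hj => hf j (mem_cons_of_mem hj)) h'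
      exact ⟨j, mem_cons_of_mem hj, hfj⟩

namespace Rmax

lemma add_finsetSup {σ : Type*} (c : Rmax) (S : Finset σ) (g : σ → Rmax) :
    c + S.sup g = S.sup fun s => c + g s :=
  apply_sup_eq_sup_comp (c + ·) (fun x y => (max_add_add_left c x y).symm) (WithBot.add_bot c)

lemma coe_neg_add_coe_add (e : ℝ) (p : Rmax) : ((-e : ℝ) : Rmax) + ((e : Rmax) + p) = p := by
  rw [← add_assoc, ← WithBot.coe_add, neg_add_cancel, WithBot.coe_zero, zero_add]

lemma max_coe_neg_add_max {e : ℝ} (he : 0 ≤ e) (p q : Rmax) :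
    max p (((-e : ℝ) : Rmax) + max p ((e : Rmax) + q)) = max p q := by
  have hp : ((-e : ℝ) : Rmax) + p ≤ p := add_le_of_nonpos_left (by exact_mod_cast neg_nonpos.2 he)
  rw [← max_add_add_left, coe_neg_add_coe_add, ← max_assoc, max_eq_left hp]

lemma eq_of_eq_max_coe_add {c : ℝ} (hc : c < 0) {p q : Rmax} (h : p = max q (c + p)) : p = q := by
  rcases max_choice q (c + p) with hq | hcp
  · exact h.trans hq
  · induction p using WithBot.recBotCoe with
    | bot => exact (le_bot_iff.1 (h ▸ le_max_left q _)).symm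
    | coe r =>
      have : r = c + r := by exact_mod_cast h.trans hcp
      linarith

lemma coe_sub_add (μ t : ℝ) (p : Rmax) :
    ((μ - t : ℝ) : Rmax) + p = ((-t : ℝ) : Rmax) + ((μ : Rmax) + p) := by
  rw [← add_assoc, ← WithBot.coe_add, neg_add_eq_sub]

lemma exists_coe_ge (p : Rmax) : ∃ r : ℝ, p ≤ r := by
  induction p using WithBot.recBotCoe with
  | bot => exact ⟨0, bot_le⟩
  | coe r => exact ⟨r, le_rfl⟩

lemma exists_pos_coe_add_nonpos {d : Rmax} (hd : d < 0) : ∃ e : ℝ, 0 < e ∧ (e : Rmax) + d ≤ 0 := by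
  induction d using WithBot.recBotCoe with
  | bot => exact ⟨1, one_pos, by simp⟩
  | coe r =>
    refine ⟨-r, neg_pos.2 (by exact_mod_cast hd), ?_⟩
    rw [← WithBot.coe_add, neg_add_cancel, WithBot.coe_zero]

lemma exists_pos_coe_add_nonpos_of_ne {σ : Type*} [Fintype σ] {lam : σ → Rmax}
    (h : ∀ s, lam s ≤ 0) : ∃ e : ℝ, 0 < e ∧ ∀ s, lam s ≠ 0 → (e : Rmax) + lam s ≤ 0 := by
  obtain ⟨e, he, hd⟩ := exists_pos_coe_add_nonpos (d := (univ.filter (lam · ≠ 0)).sup lam)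
    ((Finset.sup_lt_iff (WithBot.bot_lt_coe 0)).2 fun s hs => (h s).lt_of_ne (mem_filter.1 hs).2)
  refine ⟨e, he, fun s hs => le_trans ?_ hd⟩
  gcongr
  exact le_sup (mem_filter.2 ⟨mem_univ s, hs⟩)

lemma le_of_frequently_le_max {B : ℝ} {p q : Rmax}
    (h : ∃ᶠ t : ℝ in atTop, p ≤ max ((B - t : ℝ) : Rmax) q) : p ≤ q := by
  by_contra! hqp
  obtain ⟨r, rfl⟩ := WithBot.ne_bot_iff_exists.1 (ne_bot_of_gt hqp)
  obtain ⟨t, hpt, ht⟩ := (h.and_eventually (eventually_gt_atTop (B - r))).exists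
  refine (hpt.trans_lt (max_lt ?_ hqp)).false
  exact_mod_cast (by linarith : B - t < r)

end Rmax

def tropComb {σ ι : Type*} (S : Finset σ) (lam : σ → Rmax) (v : σ → ι → Rmax) : ι → Rmax :=
  fun i => S.sup fun s => lam s + v s i

section TropComb

variable {σ τ ι : Type*}

lemma tropComb_equivFin (S : Finset σ) (lam : σ → Rmax) (v : σ → ι → Rmax) :
    tropComb univ (fun r => lam (S.equivFin.symm r)) (fun r => v (S.equivFin.symm r)) =
      tropComb S lam v := by
  funext i
  calc (univ.sup fun r => lam (S.equivFin.symm r) + v (S.equivFin.symm r) i)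
      = (univ.map S.equivFin.symm.toEmbedding).sup fun s : S => lam s + v s i := by
        rw [sup_map]; rfl
    _ = S.sup fun s => lam s + v s i := by
        rw [map_univ_equiv, univ_eq_attach, sup_attach S fun s => lam s + v s i]

lemma tropComb_singleton (s : σ) (lam : σ → Rmax) (v : σ → ι → Rmax) :
    tropComb {s} lam v = fun i => lam s + v s i :=
  funext fun _ => sup_singleton

lemma max_tropComb (S : Finset σ) (T : Finset τ) (lam : σ → Rmax) (mu : τ → Rmax)
    (v : σ → ι → Rmax) (w : τ → ι → Rmax) :
    (fun i => max (tropComb S lam v i) (tropComb T mu w i)) =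
      tropComb (S.disjSum T) (Sum.elim lam mu) (Sum.elim v w) := by
  funext i
  simp only [tropComb, sup_disjSum, Sum.elim_inl, Sum.elim_inr]

lemma add_tropComb (c : Rmax) (S : Finset σ) (lam : σ → Rmax) (v : σ → ι → Rmax) :
    (fun i => c + tropComb S lam v i) = tropComb S (fun s => c + lam s) v := by
  funext i
  simp [tropComb, Rmax.add_finsetSup, add_assoc]

lemma tropComb_eq_max_coe_neg_add (S : Finset σ) (lam : σ → Rmax)
    (v : σ → ι → Rmax) {e : ℝ} (he : 0 ≤ e) :
    tropComb S lam v = fun i => max (tropComb (S.filter (lam · = 0)) (fun _ => 0) v i)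
      (((-e : ℝ) : Rmax) + tropComb S (fun s => if lam s = 0 then 0 else e + lam s) v i) := by
  funext i
  simp only [tropComb, Rmax.add_finsetSup]
  have hlam' : ∀ s, ((-e : ℝ) : Rmax) + (if lam s = 0 then 0 else e + lam s) ≤ lam s := by
    intro s
    split_ifs with h0
    · rw [h0, add_zero]
      exact_mod_cast neg_nonpos.2 he
    · rw [Rmax.coe_neg_add_coe_add]
  refine le_antisymm (Finset.sup_le fun s hs => ?_) (max_le (Finset.sup_le fun s hs => ?_) ?_)
  · by_cases h0 : lam s = 0
    · exact le_max_of_le_left (le_sup_of_le (mem_filter.2 ⟨hs, h0⟩) (by simp [h0]))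
    · refine le_max_of_le_right (le_sup_of_le hs ?_)
      rw [if_neg h0, add_assoc, Rmax.coe_neg_add_coe_add]
  · obtain ⟨hs, h0⟩ := mem_filter.1 hs
    exact le_sup_of_le hs (by simp [h0])
  · exact Finset.sup_le fun s hs => le_sup_of_le hs (by rw [← add_assoc]; gcongr; exact hlam' s)

end TropComb

section MaxPlusConvexity

variable {σ : Type*} {ι : Type}

lemma tropComb_mem_tropCone {X : Set (ι → Rmax)} (S : Finset σ) (lam : σ → Rmax)
    {v : σ → ι → Rmax} (hv : ∀ s ∈ S, v s ∈ X) : tropComb S lam v ∈ tropCone X :=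
  ⟨_, _, _, fun r => hv _ (S.equivFin.symm r).2, (tropComb_equivFin S lam v).symm⟩

lemma tropComb_mem_tropCo {X : Set (ι → Rmax)} (S : Finset σ) {lam : σ → Rmax}
    {v : σ → ι → Rmax} (hv : ∀ s ∈ S, v s ∈ X) (hlam : S.sup lam = 0) :
    tropComb S lam v ∈ tropCo X := by
  refine ⟨_, _, _, fun r => hv _ (S.equivFin.symm r).2, ?_, (tropComb_equivFin S lam v).symm⟩
  have := congrFun (tropComb_equivFin S lam (fun _ (_ : Unit) => (0 : Rmax))) ()
  simpa [tropComb, hlam] using this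

lemma isTropCone_tropCone (X : Set (ι → Rmax)) : IsTropCone (tropCone X) := by
  rintro _ ⟨m₁, lam₁, v₁, hv₁, rfl⟩ _ ⟨m₂, lam₂, v₂, hv₂, rfl⟩ c d
  convert tropComb_mem_tropCone (univ.disjSum univ) (Sum.elim (c + lam₁ ·) (d + lam₂ ·))
    (v := Sum.elim v₁ v₂) (by rintro (s | s) _; exacts [hv₁ s, hv₂ s]) using 1
  rw [← max_tropComb, ← add_tropComb, ← add_tropComb]
  rfl

lemma supClosed_tropCone (X : Set (ι → Rmax)) : SupClosed (tropCone X) := by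
  intro u hu w hw
  have := isTropCone_tropCone X u hu w hw 0 0
  simp only [zero_add] at this
  exact this

lemma supClosed_tropCo (X : Set (ι → Rmax)) : SupClosed (tropCo X) := by
  rintro _ ⟨m₁, lam₁, v₁, hv₁, hlam₁, rfl⟩ _ ⟨m₂, lam₂, v₂, hv₂, hlam₂, rfl⟩
  convert tropComb_mem_tropCo (univ.disjSum univ) (lam := Sum.elim lam₁ lam₂)
    (v := Sum.elim v₁ v₂) (by rintro (s | s) _; exacts [hv₁ s, hv₂ s]) ?_ using 1
  · exact max_tropComb _ _ _ _ _ _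
  · simp only [sup_disjSum, Sum.elim_inl, Sum.elim_inr, hlam₁, hlam₂, sup_idem]

lemma subset_tropCo (X : Set (ι → Rmax)) : X ⊆ tropCo X := fun x hx => by
  simpa [tropComb_singleton] using
    tropComb_mem_tropCo {()} (lam := fun _ => 0) (v := fun _ => x) (fun _ _ => hx) rfl

lemma add_mem_tropCone {X : Set (ι → Rmax)} {b : ι → Rmax} (hb : b ∈ tropCone X)
    (c : Rmax) : (fun i => c + b i) ∈ tropCone X := by
  simpa only [max_self] using isTropCone_tropCone X b hb b hb c c

lemma bot_mem_tropCone (X : Set (ι → Rmax)) : (fun _ => ⊥) ∈ tropCone X :=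
  ⟨0, Fin.elim0, Fin.elim0, fun s => s.elim0, by simp⟩

section Extreme

variable {C D : Set (ι → Rmax)} {z : ι → Rmax}

lemma IsExtremePoint.anti (hz : IsExtremePoint C z) (hDC : D ⊆ C) (hzD : z ∈ D) :
    IsExtremePoint D z :=
  ⟨hzD, fun u hu w hw => hz.2 u (hDC hu) w (hDC hw)⟩

lemma IsExtremePoint.eq_or_eq_of_sup_eq (hz : IsExtremePoint C z) {u w : ι → Rmax}
    (hu : u ∈ C) (hw : w ∈ C) (h : u ⊔ w = z) : u = z ∨ w = z := by
  refine (hz.2 u hu w hw 0 0 (max_self 0) ?_).imp Eq.symm Eq.symm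
  rw [← h]
  simp only [zero_add]
  rfl

lemma IsExtremeVector.eq_or_eq_of_sup_eq (hz : IsExtremeVector C z) {u w : ι → Rmax}
    (hu : u ∈ C) (hw : w ∈ C) (h : u ⊔ w = z) : u = z ∨ w = z :=
  (hz.2.2 u hu w hw h.symm).imp Eq.symm Eq.symm

lemma IsExtremePoint.eq_of_eq_max_coe_neg_add (hz : IsExtremePoint C z) {a w : ι → Rmax}
    (ha : a ∈ C) (hw : w ∈ C) {e : ℝ} (he : 0 < e)
    (h : z = fun i => max (a i) (((-e : ℝ) : Rmax) + w i)) : z = a := by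
  have hcomb : z = fun i => max (0 + a i) (((-e : ℝ) : Rmax) + w i) := by simpa using h
  rcases hz.2 a ha w hw 0 _ (max_eq_left (by exact_mod_cast (neg_neg_of_pos he).le)) hcomb
    with hza | rfl
  · exact hza
  funext i
  exact Rmax.eq_of_eq_max_coe_add (neg_neg_of_pos he) (congrFun h i)

end Extreme

theorem mem_of_isExtremePoint_tropCo {X : Set (ι → Rmax)} {z : ι → Rmax}
    (hz : IsExtremePoint (tropCo X) z) : z ∈ X := by
  obtain ⟨m, lam, v, hv, hlam, rfl⟩ := hz.1
  have hle : ∀ s, lam s ≤ 0 := fun s => hlam ▸ le_sup (mem_univ s)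
  set T := univ.filter (lam · = 0)
  have hT : T.Nonempty := by
    by_contra hT
    rw [not_nonempty_iff_eq_empty, filter_eq_empty_iff] at hT
    have : univ.sup lam < 0 :=
      (Finset.sup_lt_iff (WithBot.bot_lt_coe 0)).2 fun s _ => (hle s).lt_of_ne (hT (mem_univ s))
    exact this.ne hlam
  obtain ⟨s₀, hs₀⟩ := id hT
  obtain ⟨e, he, hgap⟩ := Rmax.exists_pos_coe_add_nonpos_of_ne hle
  have hw : tropComb univ (fun s => if lam s = 0 then 0 else e + lam s) v ∈ tropCo X := by
    refine tropComb_mem_tropCo univ (fun s _ => hv s) (le_antisymm (Finset.sup_le fun s _ => ?_)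
      (le_sup_of_le (mem_univ s₀) (by simp [(mem_filter.1 hs₀).2])))
    split_ifs with h0
    exacts [le_rfl, hgap s h0]
  have ha : tropComb T (fun _ => 0) v ∈ tropCo X :=
    tropComb_mem_tropCo T (fun s _ => hv s) (sup_const hT 0)
  have hza := hz.eq_of_eq_max_coe_neg_add ha hw he (tropComb_eq_max_coe_neg_add univ lam v he.le)
  obtain ⟨s, -, hs⟩ := Finset.exists_eq_of_sup'_eq_of_supClosed (supClosed_tropCo X)
    (fun u hu w hw => hz.eq_or_eq_of_sup_eq hu hw) hT (f := v)
    (fun s _ => subset_tropCo X (hv s)) <| by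
      rw [hza, Finset.sup'_eq_sup]
      funext i
      simp [tropComb, Finset.sup_apply]
  exact hs ▸ hv s

lemma subset_tropSum_tropCone (A Y : Set (ι → Rmax)) : A ⊆ tropSum A (tropCone Y) :=
  fun a ha => ⟨a, ha, _, bot_mem_tropCone Y, by simp⟩

theorem mem_of_isExtremePoint_tropSum {Z Y : Set (ι → Rmax)} {z : ι → Rmax}
    (hz : IsExtremePoint (tropSum (tropCo Z) (tropCone Y)) z) : z ∈ Z := by
  obtain ⟨a, ha, b, hb, hzab⟩ := hz.1
  have hsub := subset_tropSum_tropCone (tropCo Z) Y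
  have hw : (fun i => max (a i) (((1 : ℝ) : Rmax) + b i)) ∈ tropSum (tropCo Z) (tropCone Y) :=
    ⟨a, ha, _, add_mem_tropCone hb _, rfl⟩
  have hza : z = a := hz.eq_of_eq_max_coe_neg_add (hsub ha) hw one_pos <| by
    rw [hzab]
    funext i
    exact (Rmax.max_coe_neg_add_max zero_le_one _ _).symm
  exact mem_of_isExtremePoint_tropCo (hz.anti hsub (hza ▸ ha))

lemma tropCone_subset_recessionCone {A Y : Set (ι → Rmax)} {x : ι → Rmax}
    (hx : x ∈ tropSum A (tropCone Y)) : tropCone Y ⊆ recessionCone (tropSum A (tropCone Y)) := by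
  obtain ⟨a, ha, c, hc, rfl⟩ := hx
  refine fun b hb => ⟨_, ⟨a, ha, c, hc, rfl⟩,
    fun t => ⟨a, ha, _, isTropCone_tropCone Y c hc b hb 0 t, ?_⟩⟩
  funext i
  simp [max_assoc]

lemma tropCo_le_of_le {X : Set (ι → Rmax)} {B : Rmax} (h : ∀ v ∈ X, ∀ k, v k ≤ B)
    {a : ι → Rmax} (ha : a ∈ tropCo X) (k : ι) : a k ≤ B := by
  obtain ⟨m, lam, v, hv, hlam, rfl⟩ := ha
  refine Finset.sup_le fun s _ => ?_
  calc lam s + v s k ≤ 0 + B := add_le_add (hlam ▸ le_sup (mem_univ s)) (h _ (hv s) k)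
    _ = B := zero_add B

lemma exists_coe_bound [Fintype ι] {X : Set (ι → Rmax)} (hX : X.Finite) (x : ι → Rmax) :
    ∃ B : ℝ, (∀ k, x k ≤ B) ∧ ∀ a ∈ tropCo X, ∀ k, a k ≤ B := by
  obtain ⟨B, hB⟩ := Rmax.exists_coe_ge ((hX.insert x).toFinset.sup fun v => univ.sup v)
  have hle : ∀ v ∈ insert x X, ∀ k, v k ≤ B := fun v hv k =>
    (le_sup (mem_univ k)).trans ((le_sup (f := fun v => univ.sup v)
      ((hX.insert x).mem_toFinset.2 hv)).trans hB)
  exact ⟨B, hle x (Set.mem_insert x X),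
    fun a ha => tropCo_le_of_le (fun v hv => hle v (Set.mem_insert_of_mem x hv)) ha⟩

lemma exists_coe_add_eq_of_lt {A Y : Set (ι → Rmax)} {B : ℝ}
    (hA : ∀ a ∈ A, ∀ k, a k ≤ B) {x z : ι → Rmax} (hx : ∀ k, x k ≤ B)
    (hxz : ∀ t : Rmax, (fun k => max (x k) (t + z k)) ∈ tropSum A (tropCone Y))
    {i : ι} {ζ t : ℝ} (hzi : z i = ζ) (ht : B < t + ζ) :
    ∃ y ∈ Y, ∃ c : ℝ, (c : Rmax) + y i = z i ∧
      ∀ k, (c : Rmax) + y k ≤ max ((B - t : ℝ) : Rmax) (z k) := by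
  obtain ⟨a, ha, _, ⟨m, mu, w, hw, rfl⟩, hab⟩ := hxz t
  have htz : (t : Rmax) + z i = ((t + ζ : ℝ) : Rmax) := by rw [hzi, WithBot.coe_add]
  have hBt : (B : Rmax) < t + z i := by rw [htz]; exact_mod_cast ht
  have hbi : (univ.sup fun s => mu s + w s i) = ((t + ζ : ℝ) : Rmax) := by
    have h := congrFun hab i
    rw [max_eq_right ((hx i).trans hBt.le), htz] at h
    rcases max_eq_iff.1 h.symm with ⟨hai, -⟩ | ⟨hbi, -⟩
    · exact absurd hai ((hA a ha i).trans_lt (htz ▸ hBt)).ne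
    · exact hbi
  have hne : (univ : Finset (Fin m)).Nonempty := nonempty_iff_ne_empty.2 fun h =>
    WithBot.coe_ne_bot (hbi.symm.trans (by rw [h, sup_empty]))
  obtain ⟨s, -, hs⟩ := exists_mem_eq_sup univ hne fun s => mu s + w s i
  obtain ⟨μ, hμ⟩ := WithBot.ne_bot_iff_exists.1 fun h : mu s = ⊥ =>
    WithBot.coe_ne_bot (hbi.symm.trans (by rw [hs, h, WithBot.bot_add]))
  refine ⟨w s, hw s, μ - t, ?_, fun k => ?_⟩
  · rw [Rmax.coe_sub_add, hμ, ← hs, hbi, WithBot.coe_add, Rmax.coe_neg_add_coe_add, hzi]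
  · calc ((μ - t : ℝ) : Rmax) + w s k
        = ((-t : ℝ) : Rmax) + (mu s + w s k) := by rw [Rmax.coe_sub_add, hμ]
      _ ≤ ((-t : ℝ) : Rmax) + max (B : Rmax) (t + z k) := by
        gcongr
        calc mu s + w s k ≤ univ.sup fun s => mu s + w s k :=
              le_sup (f := fun s => mu s + w s k) (mem_univ s)
          _ ≤ max (a k) (univ.sup fun s => mu s + w s k) := le_max_right _ _
          _ = max (x k) (t + z k) := (congrFun hab k).symm
          _ ≤ max (B : Rmax) (t + z k) := max_le_max_right _ (hx k)
      _ = max ((B - t : ℝ) : Rmax) (z k) := by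
        rw [← max_add_add_left, Rmax.coe_neg_add_coe_add, ← WithBot.coe_add, neg_add_eq_sub]

end MaxPlusConvexity

section Recession

variable {ι : Type} [Fintype ι] {Z Y : Set (ι → Rmax)}

lemma exists_coe_add_eq_and_le (hZ : Z.Finite) (hY : Y.Finite) {z : ι → Rmax}
    (hz : z ∈ recessionCone (tropSum (tropCo Z) (tropCone Y))) {i : ι} (hzi : z i ≠ ⊥) :
    ∃ y ∈ Y, ∃ c : ℝ, (c : Rmax) + y i = z i ∧ ∀ k, (c : Rmax) + y k ≤ z k := by
  obtain ⟨x, -, hx⟩ := hz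
  obtain ⟨B, hxB, hZB⟩ := exists_coe_bound hZ x
  obtain ⟨ζ, hζ⟩ := WithBot.ne_bot_iff_exists.1 hzi
  have hev : ∀ᶠ t : ℝ in atTop, ∃ y ∈ Y, ∃ c : ℝ, (c : Rmax) + y i = z i ∧
      ∀ k, (c : Rmax) + y k ≤ max ((B - t : ℝ) : Rmax) (z k) :=
    (eventually_gt_atTop (B - ζ)).mono fun t ht =>
      exists_coe_add_eq_of_lt hZB hxB hx hζ.symm (by linarith)
  obtain ⟨y, hy, hfreq⟩ := (hY.frequently_exists).1 hev.frequently
  obtain ⟨-, c, hc, -⟩ := hfreq.exists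
  refine ⟨y, hy, c, hc, fun k => Rmax.le_of_frequently_le_max (B := B) (hfreq.mono ?_)⟩
  rintro t ⟨c', hc', hle⟩
  obtain ⟨η, hη⟩ := WithBot.ne_bot_iff_exists.1 fun h : y i = ⊥ =>
    hzi (by rw [← hc, h, WithBot.add_bot])
  have : c' + η = c + η := by
    rw [← hη] at hc hc'
    exact_mod_cast hc'.trans hc.symm
  exact (add_right_cancel this) ▸ hle k

theorem recessionCone_tropSum_subset (hZ : Z.Finite) (hY : Y.Finite) :
    recessionCone (tropSum (tropCo Z) (tropCone Y)) ⊆ tropCone Y := by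
  intro z hz
  choose! y hyY c hc hle using fun i (hi : z i ≠ ⊥) => exists_coe_add_eq_and_le hZ hY hz hi
  set F := univ.filter (z · ≠ ⊥)
  convert tropComb_mem_tropCone F (fun i => (c i : Rmax)) (fun i hi => hyY i (mem_filter.1 hi).2)
  funext k
  refine le_antisymm ?_ (Finset.sup_le fun i hi => hle i (mem_filter.1 hi).2 k)
  by_cases hk : z k = ⊥
  · simp [hk]
  exact (hc k hk).symm.le.trans
    (le_sup (f := fun i => (c i : Rmax) + y i k) (mem_filter.2 ⟨mem_univ k, hk⟩))

theorem exists_add_mem_of_isExtremeVector (hZ : Z.Finite) (hY : Y.Finite) {z : ι → Rmax}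
    (hz : IsExtremeVector (recessionCone (tropSum (tropCo Z) (tropCone Y))) z) :
    ∃ lam : Rmax, lam ≠ ⊥ ∧ (fun i => lam + z i) ∈ Y := by
  obtain ⟨x, hx, -⟩ := hz.1
  have hsub := tropCone_subset_recessionCone hx
  obtain ⟨m, mu, w, hw, hzw⟩ := recessionCone_tropSum_subset hZ hY hz.1
  have hne : (univ : Finset (Fin m)).Nonempty := by
    refine nonempty_iff_ne_empty.2 fun h => hz.2.1 ?_
    rw [hzw]
    simp [h]
  obtain ⟨s, -, hs⟩ := Finset.exists_eq_of_sup'_eq_of_supClosed (supClosed_tropCone Y)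
    (fun u hu v hv => hz.eq_or_eq_of_sup_eq (hsub hu) (hsub hv)) hne
    (f := fun s => tropComb {s} mu w) (fun s _ => tropComb_mem_tropCone {s} mu fun t _ => hw t)
    (by rw [Finset.sup'_eq_sup, hzw]; funext i; simp [tropComb_singleton, Finset.sup_apply])
  rw [tropComb_singleton] at hs
  obtain ⟨μ, hμ⟩ := WithBot.ne_bot_iff_exists.1 fun h : mu s = ⊥ => hz.2.1 (by rw [← hs, h]; simp)
  refine ⟨((-μ : ℝ) : Rmax), WithBot.coe_ne_bot, ?_⟩
  convert hw s using 1
  rw [← hs, ← hμ]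
  funext i
  exact Rmax.coe_neg_add_coe_add μ (w s i)

end Recession

theorem stmt_3_general {n : ℕ} (C Z Y : Set (Fin n → Rmax))
    (hZ : Z.Finite) (hY : Y.Finite)
    (hrep : C = tropSum (tropCo Z) (tropCone Y)) :
    (∀ z : Fin n → Rmax, IsExtremePoint C z → z ∈ Z) ∧
    (∀ z : Fin n → Rmax, IsExtremeVector (recessionCone C) z →
      ∃ lam : Rmax, lam ≠ ⊥ ∧ (fun i => lam + z i) ∈ Y) := by
  subst hrep
  exact ⟨fun z => mem_of_isExtremePoint_tropSum, fun z => exists_add_mem_of_isExtremeVector hZ hY⟩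

/-- extreme points of `C` belong to `Z`, and extreme vectors of the
recession cone of `C` have a non-zero scalar multiple in `Y`. -/
theorem stmt_3 {n : ℕ} (C Z Y : Set (Fin n → Rmax)) (hC : IsPolyhedron C)
    (hZ : Z.Finite) (hY : Y.Finite)
    (hrep : C = tropSum (tropCo Z) (tropCone Y)) :
    (∀ z : Fin n → Rmax, IsExtremePoint C z → z ∈ Z) ∧
    (∀ z : Fin n → Rmax, IsExtremeVector (recessionCone C) z →
      ∃ lam : Rmax, lam ≠ ⊥ ∧ (fun i => lam + z i) ∈ Y) :=
  stmt_3_general C Z Y hZ hY hrep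
end
end

section
/- Let a, b, c, d ∈ ℝ_max. If a > b, then {x ∈ ℝ_max : max(a + x, c) ≤ max(b + x, d)} = {x ∈ ℝ_max : max(a + x, c) ≤ d}. If a ≤ b, then {x ∈ ℝ_max : max(a + x, c) ≤ max(b + x, d)} = {x ∈ ℝ_max : c ≤ max(b + x, d)}. -/
noncomputable section

section LinearOrder

variable {α : Type*} [LinearOrder α] {p q c d : α}

theorem max_le_max_iff_of_le_left (hpq : p ≤ q) :
    max p c ≤ max q d ↔ c ≤ max q d :=
  ⟨fun h => (le_max_right p c).trans h, fun h => max_le (hpq.trans (le_max_left q d)) h⟩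

theorem max_le_max_iff_of_lt_left (hqp : q < p) :
    max p c ≤ max q d ↔ max p c ≤ d := by
  refine ⟨fun h => ?_, fun h => h.trans (le_max_right q d)⟩
  have hpd : p ≤ d := by
    by_contra! hdp
    exact (max_lt hqp hdp).not_ge ((le_max_left p c).trans h)
  rwa [max_eq_right (hqp.trans_le hpd).le] at h

end LinearOrder

theorem stmt_4 (a b c d : Rmax) :
    (a > b → {x : Rmax | max (a + x) c ≤ max (b + x) d} = {x : Rmax | max (a + x) c ≤ d}) ∧
    (a ≤ b → {x : Rmax | max (a + x) c ≤ max (b + x) d} = {x : Rmax | c ≤ max (b + x) d}) := by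
  refine ⟨fun hab => ?_, fun hab => ?_⟩
  · ext x
    rcases eq_or_ne x ⊥ with rfl | hx
    · simp only [Set.mem_ofPred_eq, WithBot.add_bot, max_bot_left]
    · exact max_le_max_iff_of_lt_left (WithBot.add_lt_add_right hx hab)
  · ext x
    exact max_le_max_iff_of_le_left (add_le_add_left hab x)
end
end

section
/- Let H = {x ∈ ℝ_max^n : max_{i∈I}(a_i + x_i) ≤ max_{j∈J}(a_j + x_j)} and H' = {x ∈ ℝ_max^n : max_{i∈I'}(b_i + x_i) ≤ max_{j∈J'}(b_j + x_j)} be half-spaces, where I, J are disjoint subsets of {1,...,n}, I', J' are disjoint subsets of {1,...,n}, a_k ∈ ℝ for all k ∈ I ∪ J, and b_k ∈ ℝ for all k ∈ I' ∪ J'. If I ≠ ∅, then H' ⊆ H if, and only if, I ⊆ I', J' ⊆ J, and b_j - b_i ≤ a_j - a_i for all i ∈ I and j ∈ J' (a maximum over the empty index set is -∞). -/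
noncomputable section

/-
Membership of `x` in a half-space only has to be checked index by index: each finite term
`a i + x i` of the left-hand side must be dominated by some term of the right-hand side.
Testing the inclusion `halfSpace I' J' b ⊆ halfSpace I J a` on the vectors equal to `-b` on a set
`S` and to `-∞` off it, with `S = {i}` and `S = {i, j}`, gives `I ⊆ I'`, `J' ⊆ J` and the
inequalities; conversely these conditions transfer a dominating term from `b` to `a`.
-/

section HalfSpace

variable {ι : Type}

theorem mem_halfSpace_iff {I J : Finset ι} {a : ι → ℝ} {x : ι → Rmax} :
    x ∈ halfSpace I J a ↔ ∀ i ∈ I, x i ≠ ⊥ → ∃ j ∈ J, (a i : Rmax) + x i ≤ a j + x j := by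
  rw [halfSpace, Set.mem_ofPred_eq]
  constructor
  · intro hx i hi hxi
    have hbot : ⊥ < (a i : Rmax) + x i :=
      bot_lt_iff_ne_bot.mpr (WithBot.add_ne_bot.mpr ⟨WithBot.coe_ne_bot, hxi⟩)
    exact (Finset.le_sup_iff hbot).mp
      ((Finset.le_sup (f := fun k => (a k : Rmax) + x k) hi).trans hx)
  · intro h
    refine Finset.sup_le fun i hi => ?_
    by_cases hxi : x i = ⊥
    · simp [hxi]
    · obtain ⟨j, hj, hle⟩ := h i hi hxi
      exact hle.trans (Finset.le_sup (f := fun k => (a k : Rmax) + x k) hj)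

theorem coe_add_le_coe_add_of_sub_le {p q r s : ℝ} {u v : Rmax} (h : (p : Rmax) + u ≤ q + v)
    (hsub : q - p ≤ s - r) : (r : Rmax) + u ≤ s + v := by
  induction u using WithBot.recBotCoe with
  | bot => simp
  | coe u =>
    induction v using WithBot.recBotCoe with
    | bot => simp [← WithBot.coe_add] at h
    | coe v =>
      rw [← WithBot.coe_add, ← WithBot.coe_add, WithBot.coe_le_coe] at h ⊢
      linarith

theorem halfSpace_subset_halfSpace {I J I' J' : Finset ι} {a b : ι → ℝ} (hI : I ⊆ I')
    (hJ : J' ⊆ J) (hab : ∀ i ∈ I, ∀ j ∈ J', b j - b i ≤ a j - a i) :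
    halfSpace I' J' b ⊆ halfSpace I J a := by
  intro x hx
  rw [mem_halfSpace_iff] at hx ⊢
  intro i hi hxi
  obtain ⟨j, hj, hle⟩ := hx i (hI hi) hxi
  exact ⟨j, hJ hj, coe_add_le_coe_add_of_sub_le hle (hab i hi j hj)⟩

variable [DecidableEq ι]

theorem jVec_of_mem {S : Finset ι} {y : ι → ℝ} {k : ι} (hk : k ∈ S) : jVec S y k = y k := by
  simp [jVec, hk]

theorem jVec_of_notMem {S : Finset ι} {y : ι → ℝ} {k : ι} (hk : k ∉ S) : jVec S y k = ⊥ := by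
  simp [jVec, hk]

theorem jVec_neg_mem_halfSpace {I J S : Finset ι} {b : ι → ℝ}
    (hS : (I ∩ S).Nonempty → (J ∩ S).Nonempty) : jVec S (-b) ∈ halfSpace I J b := by
  rw [mem_halfSpace_iff]
  intro i hi hxi
  have hiS : i ∈ S := by
    by_contra hiS
    exact hxi (jVec_of_notMem hiS)
  obtain ⟨j, hj⟩ := hS ⟨i, Finset.mem_inter.mpr ⟨hi, hiS⟩⟩
  obtain ⟨hjJ, hjS⟩ := Finset.mem_inter.mp hj
  refine ⟨j, hjJ, le_of_eq ?_⟩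
  rw [jVec_of_mem hiS, jVec_of_mem hjS, ← WithBot.coe_add, ← WithBot.coe_add]
  simp

theorem exists_le_of_jVec_neg_mem_halfSpace {I J S : Finset ι} {a b : ι → ℝ} {i : ι}
    (hx : jVec S (-b) ∈ halfSpace I J a) (hi : i ∈ I ∩ S) :
    ∃ k ∈ J ∩ S, a i - b i ≤ a k - b k := by
  obtain ⟨hiI, hiS⟩ := Finset.mem_inter.mp hi
  obtain ⟨k, hkJ, hle⟩ :=
    mem_halfSpace_iff.mp hx i hiI (by simp [jVec_of_mem hiS])
  by_cases hkS : k ∈ S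
  · refine ⟨k, Finset.mem_inter.mpr ⟨hkJ, hkS⟩, ?_⟩
    rw [jVec_of_mem hiS, jVec_of_mem hkS, ← WithBot.coe_add, ← WithBot.coe_add,
      WithBot.coe_le_coe] at hle
    simpa [sub_eq_add_neg] using hle
  · simp [jVec_of_mem hiS, jVec_of_notMem hkS, ← WithBot.coe_add] at hle

theorem exists_le_of_halfSpace_subset {I J I' J' S : Finset ι} {a b : ι → ℝ} {i : ι}
    (h : halfSpace I' J' b ⊆ halfSpace I J a) (hi : i ∈ I ∩ S)
    (hS : (I' ∩ S).Nonempty → (J' ∩ S).Nonempty) : ∃ k ∈ J ∩ S, a i - b i ≤ a k - b k :=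
  exists_le_of_jVec_neg_mem_halfSpace (h (jVec_neg_mem_halfSpace hS)) hi

theorem subset_of_halfSpace_subset {I J I' J' : Finset ι} {a b : ι → ℝ} (hIJ : Disjoint I J)
    (h : halfSpace I' J' b ⊆ halfSpace I J a) : I ⊆ I' := by
  intro i hi
  by_contra hi'
  obtain ⟨k, hk, -⟩ :=
    exists_le_of_halfSpace_subset (S := {i}) (i := i) h (by simp [hi]) (by simp [hi'])
  obtain ⟨hkJ, rfl⟩ : k ∈ J ∧ k = i := by simpa using hk
  exact Finset.disjoint_left.mp hIJ hi hkJ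

theorem mem_and_sub_le_of_halfSpace_subset {I J I' J' : Finset ι} {a b : ι → ℝ} {i j : ι}
    (hIJ : Disjoint I J) (h : halfSpace I' J' b ⊆ halfSpace I J a) (hi : i ∈ I) (hj : j ∈ J') :
    j ∈ J ∧ b j - b i ≤ a j - a i := by
  obtain ⟨k, hk, hle⟩ :=
    exists_le_of_halfSpace_subset (S := {i, j}) (i := i) h (by simp [hi]) fun _ => ⟨j, by simp [hj]⟩
  obtain ⟨hkJ, rfl | rfl⟩ : k ∈ J ∧ (k = i ∨ k = j) := by simpa using hk
  · exact absurd hkJ (Finset.disjoint_left.mp hIJ hi)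
  · exact ⟨hkJ, by linarith⟩

end HalfSpace

theorem stmt_5_general {n : ℕ} (I J I' J' : Finset (Fin n)) (a b : Fin n → ℝ)
    (hIJ : Disjoint I J) (hI : I.Nonempty) :
    halfSpace I' J' b ⊆ halfSpace I J a ↔
      I ⊆ I' ∧ J' ⊆ J ∧ ∀ i ∈ I, ∀ j ∈ J', b j - b i ≤ a j - a i := by
  refine ⟨fun h => ?_, fun ⟨hII', hJ'J, hab⟩ => halfSpace_subset_halfSpace hII' hJ'J hab⟩
  obtain ⟨i₀, hi₀⟩ := hI
  exact ⟨subset_of_halfSpace_subset hIJ h,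
    fun j hj => (mem_and_sub_le_of_halfSpace_subset hIJ h hi₀ hj).1,
    fun i hi j hj => (mem_and_sub_le_of_halfSpace_subset hIJ h hi hj).2⟩

/-- inclusion criterion for half-spaces in normal form. -/
theorem stmt_5 {n : ℕ} (I J I' J' : Finset (Fin n)) (a b : Fin n → ℝ)
    (hIJ : Disjoint I J) (hIJ' : Disjoint I' J') (hI : I.Nonempty) :
    halfSpace I' J' b ⊆ halfSpace I J a ↔
      I ⊆ I' ∧ J' ⊆ J ∧ ∀ i ∈ I, ∀ j ∈ J', b j - b i ≤ a j - a i :=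
  stmt_5_general I J I' J' a b hIJ hI
end
end

section
/- Let V ⊆ ℝ_max^n be a max-plus cone with full support, and let {H_r}_{r∈ℕ} be a decreasing sequence (H_{r+1} ⊆ H_r) of half-spaces such that V ⊆ H_r for all r ∈ ℕ. Then there exists a half-space H such that H = ∩_{r∈ℕ} H_r. -/
noncomputable section

/-! Every half-space can be written as `max_{i ∈ I} (c i + x i) ≤ max_{j ∈ J} (c j + x j)` with
`I`, `J` disjoint and `c` real, and some pair `(I, J)` recurs along a subsequence, whose
intersection is the same. For fixed `(I, J)`, testing with vectors supported on `{i, j}` shows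
that `c i - c j` increases along the chain, so the coefficients can be rescaled to increase on `I`
and decrease on `J`; a point of the intersection that is finite at `i ∈ I` bounds them there.
The intersection is then the half-space with coefficients `sup_m c_m` on `I` and `inf_m c_m` on
`J`: at a point of the intersection, each `i` is dominated by a single `j` infinitely often. -/

open Finset Filter

variable {ι : Type}

theorem isHalfSpace_setOf_sup_le_sup [Fintype ι] (I J : Finset ι) (a b : ι → Rmax) :
    IsHalfSpace {x | I.sup (fun i => a i + x i) ≤ J.sup (fun j => b j + x j)} := by
  classical
  have hext : ∀ (K : Finset ι) (f x : ι → Rmax),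
      univ.sup (fun k => (if k ∈ K then f k else ⊥) + x k) = K.sup (fun k => f k + x k) := by
    intro K f x
    simp only [ite_add, WithBot.bot_add, sup_ite, filter_mem_eq_inter, univ_inter, sup_bot,
      sup_bot_eq]
  exact ⟨fun i => if i ∈ I then a i else ⊥, fun j => if j ∈ J then b j else ⊥, by simp only [hext]⟩

theorem sup_le_sup_filter_of_sup_le [Fintype ι] {a b x : ι → Rmax}
    (h : univ.sup (fun i => a i + x i) ≤ univ.sup (fun j => b j + x j)) :
    univ.sup (fun j => b j + x j) ≤
      (univ.filter fun j => b j ≠ ⊥ ∧ a j ≤ b j).sup (fun j => b j + x j) := by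
  obtain hE | hne := (univ : Finset ι).eq_empty_or_nonempty
  · simp [hE]
  obtain ⟨k, -, hk⟩ := exists_mem_eq_sup univ hne (fun j => b j + x j)
  rw [hk]
  by_cases hkJ : b k ≠ ⊥ ∧ a k ≤ b k
  · exact le_sup (f := fun j => b j + x j) (mem_filter.2 ⟨mem_univ k, hkJ⟩)
  by_cases hbot : b k + x k = ⊥
  · simp [hbot]
  obtain ⟨hbk, hxk⟩ := WithBot.add_ne_bot.1 hbot
  have hlt : b k < a k := lt_of_not_ge fun hle => hkJ ⟨hbk, hle⟩
  have hle : a k + x k ≤ b k + x k := hk ▸ (le_sup (mem_univ k)).trans h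
  exact absurd hle (WithBot.add_lt_add_right hxk hlt).not_ge

theorem IsHalfSpace.exists_eq_halfSpace [Fintype ι] {H : Set (ι → Rmax)} (hH : IsHalfSpace H) :
    ∃ (I J : Finset ι) (c : ι → ℝ), Disjoint I J ∧ H = halfSpace I J c := by
  classical
  obtain ⟨a, b, rfl⟩ := hH
  -- coordinates with `a ≤ b` never bind on the left, and those with `b < a` never attain the
  -- maximum on the right
  set I := univ.filter fun i => b i < a i
  set J := univ.filter fun j => b j ≠ ⊥ ∧ a j ≤ b j
  have hcoe : ∀ y : Rmax, y ≠ ⊥ → ((y.unbotD 0 : ℝ) : Rmax) = y := fun y hy => by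
    obtain ⟨r, rfl⟩ := WithBot.ne_bot_iff_exists.1 hy
    rfl
  have hIJ : Disjoint I J := disjoint_filter.2 fun k _ hk hk' => hk'.2.not_gt hk
  refine ⟨I, J, fun k => if k ∈ I then (a k).unbotD 0 else (b k).unbotD 0, hIJ, ?_⟩
  ext x
  have hcI : I.sup (fun i => ((if i ∈ I then (a i).unbotD 0 else (b i).unbotD 0 : ℝ) : Rmax)
      + x i) = I.sup (fun i => a i + x i) := sup_congr rfl fun i hi => by
    rw [if_pos hi, hcoe _ (ne_bot_of_gt (mem_filter.1 hi).2)]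
  have hcJ : J.sup (fun j => ((if j ∈ I then (a j).unbotD 0 else (b j).unbotD 0 : ℝ) : Rmax)
      + x j) = J.sup (fun j => b j + x j) := sup_congr rfl fun j hj => by
    rw [if_neg (disjoint_right.1 hIJ hj), hcoe _ (mem_filter.1 hj).2.1]
  simp only [halfSpace, Set.mem_ofPred_eq, hcI, hcJ]
  constructor
  · exact fun h => (sup_mono (subset_univ I)).trans (h.trans (sup_le_sup_filter_of_sup_le h))
  · intro h
    refine Finset.sup_le fun i _ => ?_
    by_cases hi : b i < a i
    · exact (le_sup (f := fun i => a i + x i) (mem_filter.2 ⟨mem_univ i, hi⟩)).trans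
        (h.trans (sup_mono (subset_univ J)))
    · exact (add_le_add (not_lt.1 hi) le_rfl).trans (le_sup (f := fun j => b j + x j) (mem_univ i))

theorem halfSpace_add_const (I J : Finset ι) (c : ι → ℝ) (t : ℝ) :
    halfSpace I J (fun k => c k + t) = halfSpace I J c := by
  have hsup : ∀ (K : Finset ι) (x : ι → Rmax),
      K.sup (fun k => ((c k + t : ℝ) : Rmax) + x k) = K.sup (fun k => (c k : Rmax) + x k) + t := by
    intro K x
    rw [apply_sup_eq_sup_comp (· + (t : Rmax)) (fun _ _ => (max_add_add_right _ _ _).symm)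
      (WithBot.bot_add _)]
    simp only [Function.comp_def, WithBot.coe_add, add_right_comm]
  ext x
  simp only [halfSpace, Set.mem_ofPred_eq, hsup, WithBot.add_le_add_iff_right WithBot.coe_ne_bot]

theorem mem_halfSpace_pair [DecidableEq ι] {I J : Finset ι} (hIJ : Disjoint I J) {i j : ι}
    (hi : i ∈ I) (hj : j ∈ J) (c : ι → ℝ) (s : ℝ) :
    (fun k => if k = i then (s : Rmax) else if k = j then 0 else ⊥) ∈ halfSpace I J c ↔
      c i + s ≤ c j := by
  have hsup : ∀ (K : Finset ι) (p : ι) (f : ι → Rmax), p ∈ K → (∀ k ∈ K, k ≠ p → f k = ⊥) →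
      K.sup f = f p := fun K p f hp hf =>
    le_antisymm (Finset.sup_le fun k hk => (eq_or_ne k p).elim (fun h => by rw [h])
      fun h => (hf k hk h).trans_le bot_le) (le_sup hp)
  have hjI : j ∉ I := disjoint_right.1 hIJ hj
  have hiJ : i ∉ J := disjoint_left.1 hIJ hi
  simp only [halfSpace, Set.mem_ofPred_eq]
  rw [hsup I i _ hi fun k hk hki => by simp [hki, ne_of_mem_of_not_mem hk hjI],
    hsup J j _ hj fun k hk hkj => by simp [hkj, ne_of_mem_of_not_mem hk hiJ]]
  simp [ne_of_mem_of_not_mem hj hiJ, ← WithBot.coe_add]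

theorem sub_le_sub_of_halfSpace_subset {I J : Finset ι} (hIJ : Disjoint I J) {c d : ι → ℝ}
    (h : halfSpace I J d ⊆ halfSpace I J c) {i j : ι} (hi : i ∈ I) (hj : j ∈ J) :
    c i - c j ≤ d i - d j := by
  classical
  have hd := (mem_halfSpace_pair hIJ hi hj d (d j - d i)).2 (by linarith)
  have hc := (mem_halfSpace_pair hIJ hi hj c (d j - d i)).1 (h hd)
  linarith

theorem Finset.exists_forall_le_and_forall_le {I J : Finset ι} {f g : ι → ℝ}
    (h : ∀ i ∈ I, ∀ j ∈ J, f j ≤ g i) : ∃ t, (∀ j ∈ J, f j ≤ t) ∧ ∀ i ∈ I, t ≤ g i := by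
  obtain rfl | hJ := J.eq_empty_or_nonempty
  · exact ⟨sInf (g '' I), by simp, fun i hi =>
      csInf_le ((I.finite_toSet.image g).bddBelow) (Set.mem_image_of_mem g hi)⟩
  · exact ⟨J.sup' hJ f, fun j hj => le_sup' f hj, fun i hi => sup'_le hJ f (h i hi)⟩

theorem exists_monotone_antitone_sub {I J : Finset ι} (c : ℕ → ι → ℝ)
    (h : ∀ m, ∀ i ∈ I, ∀ j ∈ J, c m i - c m j ≤ c (m + 1) i - c (m + 1) j) :
    ∃ s : ℕ → ℝ, (∀ i ∈ I, Monotone fun m => c m i - s m) ∧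
      ∀ j ∈ J, Antitone fun m => c m j - s m := by
  -- `s` accumulates, step by step, a separator of the increments of `c` on `J` and on `I`
  choose t hJt hIt using fun m => exists_forall_le_and_forall_le
    (f := fun k => c (m + 1) k - c m k) (g := fun k => c (m + 1) k - c m k)
    fun i hi j hj => by linarith [h m i hi j hj]
  refine ⟨fun m => ∑ k ∈ range m, t k, fun i hi => monotone_nat_of_le_succ fun m => ?_,
    fun j hj => antitone_nat_of_succ_le fun m => ?_⟩
  · simp only [sum_range_succ]
    linarith [hIt m i hi]
  · simp only [sum_range_succ]
    linarith [hJt m j hj]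

theorem bddAbove_of_forall_mem_halfSpace {I J : Finset ι} {c : ℕ → ι → ℝ}
    (hJ : ∀ j ∈ J, Antitone fun m => c m j) {x : ι → Rmax} (hx : ∀ m, x ∈ halfSpace I J (c m))
    {i : ι} (hi : i ∈ I) (hxi : x i ≠ ⊥) : BddAbove (Set.range fun m => c m i) := by
  obtain ⟨ξ, hξ⟩ := WithBot.ne_bot_iff_exists.1 hxi
  set C := J.sup fun j => (c 0 j : Rmax) + x j
  have hC : ∀ m, ((c m i + ξ : ℝ) : Rmax) ≤ C := fun m => by
    rw [WithBot.coe_add, hξ]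
    exact (le_sup (f := fun i => (c m i : Rmax) + x i) hi).trans ((hx m).trans
      (sup_mono_fun fun j hj => add_le_add (WithBot.coe_le_coe.2 (hJ j hj m.zero_le)) le_rfl))
  obtain ⟨C', hC'⟩ := WithBot.ne_bot_iff_exists.1 (ne_bot_of_le_ne_bot WithBot.coe_ne_bot (hC 0))
  refine ⟨C' - ξ, Set.forall_mem_range.2 fun m => ?_⟩
  have := hC m
  rw [← hC', WithBot.coe_le_coe] at this
  linarith

theorem exists_forall_le_of_forall_mem_halfSpace {I J : Finset ι} {c : ℕ → ι → ℝ}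
    (hI : ∀ i ∈ I, Monotone fun m => c m i) (hJ : ∀ j ∈ J, Antitone fun m => c m j)
    {x : ι → Rmax} (hx : ∀ m, x ∈ halfSpace I J (c m)) {i : ι} (hi : i ∈ I) (hxi : x i ≠ ⊥) :
    ∃ j ∈ J, ∀ t M, (c t i : Rmax) + x i ≤ c M j + x j := by
  have hpos : ∀ m, ⊥ < (c m i : Rmax) + x i := fun m =>
    bot_lt_iff_ne_bot.2 (WithBot.add_ne_bot.2 ⟨WithBot.coe_ne_bot, hxi⟩)
  have hfreq : ∃ᶠ m in atTop, ∃ j ∈ J, (c m i : Rmax) + x i ≤ c m j + x j :=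
    .of_forall fun m => (Finset.le_sup_iff (hpos m)).1
      ((le_sup (f := fun i => (c m i : Rmax) + x i) hi).trans (hx m))
  obtain ⟨j, hj, hfreqj⟩ := J.frequently_exists.1 hfreq
  refine ⟨j, hj, fun t M => ?_⟩
  obtain ⟨m, hm, hle⟩ := frequently_atTop.1 hfreqj (max t M)
  calc (c t i : Rmax) + x i ≤ c m i + x i :=
        add_le_add (WithBot.coe_le_coe.2 (hI i hi (le_of_max_le_left hm))) le_rfl
    _ ≤ c m j + x j := hle
    _ ≤ c M j + x j :=
        add_le_add (WithBot.coe_le_coe.2 (hJ j hj (le_of_max_le_right hm))) le_rfl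

theorem coe_ciSup_add_le_ciInf_add {f g : ℕ → ℝ} {y z : Rmax} (hy : y ≠ ⊥)
    (h : ∀ t M, (f t : Rmax) + y ≤ g M + z) :
    ((⨆ t, f t : ℝ) : Rmax) + y ≤ (⨅ M, (g M : Rmax)) + z := by
  obtain ⟨ξ, rfl⟩ := WithBot.ne_bot_iff_exists.1 hy
  obtain hz | ⟨η, rfl⟩ := (eq_or_ne z ⊥).imp_right WithBot.ne_bot_iff_exists.1
  · simpa [hz, ← WithBot.coe_add] using h 0 0
  simp only [← WithBot.coe_add, WithBot.coe_le_coe] at h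
  have hinf : (((⨆ t, f t) + ξ - η : ℝ) : Rmax) ≤ ⨅ M, (g M : Rmax) :=
    le_ciInf fun M => WithBot.coe_le_coe.2 <| by
      linarith [ciSup_le fun t => (show f t ≤ g M + η - ξ by linarith [h t M])]
  calc (((⨆ t, f t) : ℝ) : Rmax) + ξ = (((⨆ t, f t) + ξ - η : ℝ) : Rmax) + η := by
        rw [← WithBot.coe_add, ← WithBot.coe_add]; ring_nf
    _ ≤ (⨅ M, (g M : Rmax)) + η := add_le_add hinf le_rfl

theorem iInter_halfSpace_eq_of_monotone_antitone {I J : Finset ι} {c : ℕ → ι → ℝ}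
    (hI : ∀ i ∈ I, Monotone fun m => c m i) (hJ : ∀ j ∈ J, Antitone fun m => c m j)
    (hbdd : ∀ i ∈ I, BddAbove (Set.range fun m => c m i)) :
    ⋂ m, halfSpace I J (c m) = {x | I.sup (fun i => ((⨆ m, c m i : ℝ) : Rmax) + x i) ≤
      J.sup (fun j => (⨅ m, (c m j : Rmax)) + x j)} := by
  ext x
  simp only [Set.mem_iInter, Set.mem_ofPred_eq]
  constructor
  · intro hx
    refine Finset.sup_le fun i hi => ?_
    by_cases hxi : x i = ⊥
    · simp [hxi]
    obtain ⟨j, hj, hij⟩ := exists_forall_le_of_forall_mem_halfSpace hI hJ hx hi hxi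
    exact (coe_ciSup_add_le_ciInf_add hxi hij).trans
      (le_sup (f := fun j => (⨅ m, (c m j : Rmax)) + x j) hj)
  · intro hx m
    calc I.sup (fun i => (c m i : Rmax) + x i)
        ≤ I.sup (fun i => ((⨆ m, c m i : ℝ) : Rmax) + x i) := sup_mono_fun fun i hi =>
          add_le_add (WithBot.coe_le_coe.2 (le_ciSup (hbdd i hi) m)) le_rfl
      _ ≤ J.sup (fun j => (⨅ m, (c m j : Rmax)) + x j) := hx
      _ ≤ J.sup (fun j => (c m j : Rmax) + x j) := sup_mono_fun fun j _ =>
          add_le_add (ciInf_le (OrderBot.bddBelow _) m) le_rfl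

theorem isHalfSpace_iInter_halfSpace [Fintype ι] {I J : Finset ι} (hIJ : Disjoint I J)
    {c : ℕ → ι → ℝ} (hanti : Antitone fun m => halfSpace I J (c m))
    (hsupp : ∀ i ∈ I, ∃ x ∈ ⋂ m, halfSpace I J (c m), x i ≠ ⊥) :
    IsHalfSpace (⋂ m, halfSpace I J (c m)) := by
  obtain ⟨s, hsI, hsJ⟩ := exists_monotone_antitone_sub c fun m i hi j hj =>
    sub_le_sub_of_halfSpace_subset hIJ (hanti m.le_succ) hi hj
  have hshift : ∀ m, halfSpace I J (c m) = halfSpace I J (fun k => c m k - s m) := fun m => by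
    simp_rw [sub_eq_add_neg, halfSpace_add_const]
  simp_rw [hshift] at hsupp ⊢
  rw [iInter_halfSpace_eq_of_monotone_antitone hsI hsJ fun i hi => ?_]
  · exact isHalfSpace_setOf_sup_le_sup I J _ _
  obtain ⟨x, hx, hxi⟩ := hsupp i hi
  exact bddAbove_of_forall_mem_halfSpace hsJ (Set.mem_iInter.1 hx) hi hxi

theorem stmt_6_general {n : ℕ} (V : Set (Fin n → Rmax))
    (hsupp : HasFullSupport V) (H : ℕ → Set (Fin n → Rmax))
    (hHS : ∀ r, IsHalfSpace (H r)) (hdec : ∀ r, H (r + 1) ⊆ H r)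
    (hVH : ∀ r, V ⊆ H r) :
    ∃ H' : Set (Fin n → Rmax), IsHalfSpace H' ∧ H' = ⋂ r, H r := by
  have hanti : Antitone H := antitone_nat_of_succ_le hdec
  choose I J c hIJ hHc using fun r => (hHS r).exists_eq_halfSpace
  obtain ⟨p, hp⟩ := frequently_exists (p := fun p r => (I r, J r) = p) (l := atTop) |>.1
    (.of_forall fun r => ⟨_, rfl⟩)
  obtain ⟨φ, hφ, hφp⟩ := extraction_of_frequently_atTop hp
  have hHφ : ∀ k, H (φ k) = halfSpace p.1 p.2 (c (φ k)) := fun k => by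
    rw [hHc, ← hφp k]
  refine ⟨_, ?_, hanti.iInter_comp_tendsto_atTop hφ.tendsto_atTop⟩
  simp_rw [hHφ]
  refine isHalfSpace_iInter_halfSpace (hφp 0 ▸ hIJ (φ 0)) (fun k l hkl => ?_) fun i _ => ?_
  · simpa only [← hHφ] using hanti (hφ.monotone hkl)
  · obtain ⟨v, hv, hvi⟩ := hsupp i
    exact ⟨v, Set.mem_iInter.2 fun k => hHφ k ▸ hVH (φ k) hv, hvi⟩

/-- the intersection of a decreasing sequence of half-spaces all
containing a max-plus cone with full support is a half-space. -/
theorem stmt_6 {n : ℕ} (V : Set (Fin n → Rmax)) (hV : IsTropCone V)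
    (hsupp : HasFullSupport V) (H : ℕ → Set (Fin n → Rmax))
    (hHS : ∀ r, IsHalfSpace (H r)) (hdec : ∀ r, H (r + 1) ⊆ H r)
    (hVH : ∀ r, V ⊆ H r) :
    ∃ H' : Set (Fin n → Rmax), IsHalfSpace H' ∧ H' = ⋂ r, H r :=
  stmt_6_general V hsupp H hHS hdec hVH
end
end
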